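/- arXiv:0902.4416 — 3 statements merged into one kernel-verified Lean document; each statement's English description precedes it below -/
import Mathlib

section
/- Let â : E₁ → E₂ be a closed surjective linear operator between Banach spaces, and let k(â) := ‖ã⁻¹‖ be the norm of the bounded inverse of the induced map on E₁/ker â. Then the set-valued inverse â⁻¹ : E₂ → (subsets of E₁), y ↦ {x ∈ D(â) : â x = y}, is Lipschitz with constant k(â) with respect to the Hausdorff distance: for all y₁, y₂ ∈ E₂, d_H(â⁻¹(y₁), â⁻¹(y₂)) ≤ k(â)·‖y₁ − y₂‖. -/
/-!
Each fiber `â⁻¹ y` is a translate `x_y + ker â`, and moving from a point of `â⁻¹ y₁` to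
`â⁻¹ y₂` costs exactly a preimage of `y₂ - y₁`. So the Hausdorff distance of two fibers is
bounded by `m (y₂ - y₁)`, where `m y` is the infimal norm of a preimage of `y`. The function `m`
is positively homogeneous, hence `m y ≤ k(â) ‖y‖` by the definition of `k(â)` as the supremum
of `m` on the unit sphere. That supremum is finite (otherwise `sSup` would be the junk value `0`)
by the open mapping theorem applied to the projection of the complete graph of `â` onto `E₂`.
-/

open Metric Set

namespace LinearPMap

section NontriviallyNormedField

variable {𝕜 E₁ E₂ : Type*} [NontriviallyNormedField 𝕜]
  [NormedAddCommGroup E₁] [NormedSpace 𝕜 E₁] [NormedAddCommGroup E₂] [NormedSpace 𝕜 E₂]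
  (a : E₁ →ₗ.[𝕜] E₂)

def fiber (y : E₂) : Set E₁ := {x : E₁ | ∃ hx : x ∈ a.domain, a ⟨x, hx⟩ = y}

noncomputable def infNormPreimage (y : E₂) : ℝ :=
  sInf {t : ℝ | ∃ x : a.domain, a x = y ∧ ‖(x : E₁)‖ = t}

theorem infNormPreimage_nonneg (y : E₂) : 0 ≤ a.infNormPreimage y :=
  Real.sInf_nonneg (by rintro _ ⟨x, -, rfl⟩; exact norm_nonneg _)

theorem infNormPreimage_le {x : a.domain} {y : E₂} (hx : a x = y) :
    a.infNormPreimage y ≤ ‖(x : E₁)‖ :=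
  csInf_le ⟨0, by rintro _ ⟨x, -, rfl⟩; exact norm_nonneg _⟩ ⟨x, hx, rfl⟩

theorem infNormPreimage_smul_le (hsurj : ∀ y : E₂, ∃ x : a.domain, a x = y) (c : 𝕜) (y : E₂) :
    a.infNormPreimage (c • y) ≤ ‖c‖ * a.infNormPreimage y := by
  obtain ⟨x₀, hx₀⟩ := hsurj y
  rw [← smul_eq_mul]
  unfold infNormPreimage
  rw [← Real.sInf_smul_of_nonneg (norm_nonneg c)]
  refine le_csInf ⟨_, smul_mem_smul_set ⟨x₀, hx₀, rfl⟩⟩ ?_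
  rintro _ ⟨_, ⟨x, hx, rfl⟩, rfl⟩
  calc a.infNormPreimage (c • y) ≤ ‖((c • x : a.domain) : E₁)‖ :=
        a.infNormPreimage_le (by rw [a.map_smul, hx])
    _ = ‖c‖ • ‖(x : E₁)‖ := norm_smul c (x : E₁)

theorem infDist_fiber_le_infNormPreimage {x : E₁} {y₁ : E₂} (hx : x ∈ a.fiber y₁) (y₂ : E₂) :
    infDist x (a.fiber y₂) ≤ a.infNormPreimage (y₂ - y₁) := by
  obtain ⟨hxd, hax⟩ := hx
  have translate_mem {u : a.domain} (hu : a u = y₂ - y₁) : x + u ∈ a.fiber y₂ :=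
    ⟨add_mem hxd u.2, by
      rw [show (⟨x + u, add_mem hxd u.2⟩ : a.domain) = ⟨x, hxd⟩ + u from rfl, a.map_add, hax, hu,
        add_sub_cancel]⟩
  rcases eq_empty_or_nonempty (a.fiber y₂) with hempty | ⟨x', hx'd, hax'⟩
  · rw [hempty, infDist_empty]
    exact a.infNormPreimage_nonneg _
  refine le_csInf ⟨_, ⟨x', hx'd⟩ - ⟨x, hxd⟩, by rw [a.map_sub, hax', hax], rfl⟩ ?_
  rintro _ ⟨u, hu, rfl⟩
  exact (infDist_le_dist_of_mem (translate_mem hu)).trans_eq (dist_self_add_right _ _)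

theorem exists_preimage_norm_le [CompleteSpace E₁] [CompleteSpace E₂]
    (hclosed : a.IsClosed) (hsurj : ∀ y : E₂, ∃ x : a.domain, a x = y) :
    ∃ C > 0, ∀ y : E₂, ∃ x : a.domain, a x = y ∧ ‖(x : E₁)‖ ≤ C * ‖y‖ := by
  have : CompleteSpace a.graph := hclosed.completeSpace_coe
  let π : a.graph →L[𝕜] E₂ := (ContinuousLinearMap.snd 𝕜 E₁ E₂).comp a.graph.subtypeL
  have hπ : Function.Surjective π := fun y ↦
    let ⟨x, hx⟩ := hsurj y
    ⟨⟨((x : E₁), a x), a.mem_graph x⟩, hx⟩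
  obtain ⟨C, hC₀, hC⟩ := π.exists_preimage_norm_le hπ
  refine ⟨C, hC₀, fun y ↦ ?_⟩
  obtain ⟨g, hgy, hg⟩ := hC y
  obtain ⟨x, hx₁, hx₂⟩ := a.mem_graph_iff.mp g.2
  exact ⟨x, hx₂.trans hgy, hx₁ ▸ (norm_fst_le _).trans hg⟩

theorem bddAbove_infNormPreimage_sphere [CompleteSpace E₁] [CompleteSpace E₂]
    (hclosed : a.IsClosed) (hsurj : ∀ y : E₂, ∃ x : a.domain, a x = y) :
    BddAbove {r : ℝ | ∃ y : E₂, ‖y‖ = 1 ∧ r = a.infNormPreimage y} := by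
  obtain ⟨C, -, hC⟩ := a.exists_preimage_norm_le hclosed hsurj
  refine ⟨C, ?_⟩
  rintro _ ⟨y, hy, rfl⟩
  obtain ⟨x, hx, hxC⟩ := hC y
  simpa [hy] using (a.infNormPreimage_le hx).trans hxC

end NontriviallyNormedField

section RCLike

variable {𝕜 E₁ E₂ : Type*} [RCLike 𝕜]
  [NormedAddCommGroup E₁] [NormedSpace 𝕜 E₁] [NormedAddCommGroup E₂] [NormedSpace 𝕜 E₂]
  (a : E₁ →ₗ.[𝕜] E₂)

theorem infNormPreimage_le_mul_norm (hsurj : ∀ y : E₂, ∃ x : a.domain, a x = y) {k : ℝ}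
    (hk : ∀ u : E₂, ‖u‖ = 1 → a.infNormPreimage u ≤ k) (y : E₂) :
    a.infNormPreimage y ≤ k * ‖y‖ := by
  rcases eq_or_ne y 0 with rfl | hy
  · simpa using a.infNormPreimage_le (x := 0) a.map_zero
  have hy_eq : y = (‖y‖ : 𝕜) • ((‖y‖⁻¹ : 𝕜) • y) := by
    rw [smul_smul, mul_inv_cancel₀ (by exact_mod_cast norm_ne_zero_iff.mpr hy), one_smul]
  calc a.infNormPreimage y ≤ ‖(‖y‖ : 𝕜)‖ * a.infNormPreimage ((‖y‖⁻¹ : 𝕜) • y) := by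
        conv_lhs => rw [hy_eq]
        exact a.infNormPreimage_smul_le hsurj _ _
    _ ≤ ‖y‖ * k := by
        rw [RCLike.norm_ofReal, abs_norm]
        gcongr
        exact hk _ (norm_smul_inv_norm hy)
    _ = k * ‖y‖ := mul_comm _ _

end RCLike

end LinearPMap

/-- For a closed surjective linear operator `â` between Banach spaces with
`k(â) = sup_{‖y‖=1} inf {‖x‖ : â x = y}`, the set-valued inverse `y ↦ {x ∈ D(â) : â x = y}`
is Lipschitz with constant `k(â)` for the Hausdorff distance. -/
theorem setValued_inverse_lipschitz_hausdorff
    {E₁ E₂ : Type*} [NormedAddCommGroup E₁] [NormedSpace ℝ E₁] [CompleteSpace E₁]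
    [NormedAddCommGroup E₂] [NormedSpace ℝ E₂] [CompleteSpace E₂]
    (a : E₁ →ₗ.[ℝ] E₂)
    (hclosed : IsClosed (a.graph : Set (E₁ × E₂)))
    (hsurj : ∀ y : E₂, ∃ x : a.domain, a x = y)
    (k : ℝ)
    (hk : k = sSup {r : ℝ | ∃ y : E₂, ‖y‖ = 1 ∧
      r = sInf {t : ℝ | ∃ x : a.domain, a x = y ∧ ‖(x : E₁)‖ = t}}) :
    ∀ y₁ y₂ : E₂,
      Metric.hausdorffDist
        {x : E₁ | ∃ hx : x ∈ a.domain, a ⟨x, hx⟩ = y₁}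
        {x : E₁ | ∃ hx : x ∈ a.domain, a ⟨x, hx⟩ = y₂} ≤ k * ‖y₁ - y₂‖ := by
  intro y₁ y₂
  have hk_sphere (u : E₂) (hu : ‖u‖ = 1) : a.infNormPreimage u ≤ k :=
    hk ▸ le_csSup (a.bddAbove_infNormPreimage_sphere hclosed hsurj) ⟨u, hu, rfl⟩
  have hk₀ : 0 ≤ k :=
    hk ▸ Real.sSup_nonneg (by rintro _ ⟨y, -, rfl⟩; exact a.infNormPreimage_nonneg y)
  have hfiber (z₁ z₂ : E₂) (x : E₁) (hx : x ∈ a.fiber z₁) :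
      infDist x (a.fiber z₂) ≤ k * ‖z₁ - z₂‖ := by
    rw [norm_sub_rev]
    exact (a.infDist_fiber_le_infNormPreimage hx z₂).trans
      (a.infNormPreimage_le_mul_norm hsurj hk_sphere _)
  exact hausdorffDist_le_of_infDist (by positivity) (hfiber y₁ y₂)
    fun x hx ↦ norm_sub_rev y₁ y₂ ▸ hfiber y₂ y₁ x hx
end

section
/- Under the hypotheses of the main construction, the map φ_r^{(ε)}(y,t) = (t/(t²+ε²))·f_r(t·s(y) + t²·c̄) is compact on E₂ ⊕ ℝ for every ε ≠ 0: it is continuous and maps every bounded subset of E₂ ⊕ ℝ to a relatively compact subset of E₂. -/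
open scoped Classical
open Bornology Metric Topology

/-!
Write `g(y,t) = t • s y + t² • c̄`, so that `(g(y,t), t • y)` lies on the graph of `â`, and
`φ(y,t) = λ(t) • f_r(g(y,t))` with `|λ(t)| = |t| / (t² + ε²) ≤ 1 / (2|ε|)`. Continuity comes from
that of `f` on the sphere and from `‖f_r x‖ ≤ k_f⁻¹ ‖x‖` at the origin. For compactness it suffices
that `f_r` maps sets `A₁` with `A₁` and `â A₁` bounded to relatively compact sets. Points of norm
`< δ` are sent into the `k_f⁻¹ δ`-ball; on points of norm `≥ δ`, projecting radially to the sphere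
multiplies `â` by at most `r / δ`, so the `â`-compactness of `f` yields a compact set `K`, and
`f_r` takes values in the compact set `[0, R / r] • K`. Hence the image is totally bounded, so
relatively compact in the complete space `E₂`.
-/

theorem totallyBounded_of_forall_subset_union_ball {X : Type*} [PseudoMetricSpace X]
    {S : Set X} (z : X)
    (h : ∀ η > 0, ∃ K : Set X, TotallyBounded K ∧ S ⊆ K ∪ ball z η) : TotallyBounded S := by
  refine totallyBounded_iff.2 fun η hη => ?_
  obtain ⟨K, hK, hSK⟩ := h η hη
  obtain ⟨t, ht, hKt⟩ := totallyBounded_iff.1 hK η hη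
  refine ⟨insert z t, ht.insert z, hSK.trans (Set.union_subset (hKt.trans ?_) ?_)⟩
  · exact Set.biUnion_mono (Set.subset_insert z t) fun _ _ => subset_rfl
  · exact Set.subset_biUnion_of_mem (u := fun y => ball y η) (Set.mem_insert z t)

theorem abs_div_sq_add_sq_le (t : ℝ) {ε : ℝ} (hε : ε ≠ 0) :
    |t / (t ^ 2 + ε ^ 2)| ≤ (2 * |ε|)⁻¹ := by
  have hpos : 0 < t ^ 2 + ε ^ 2 := by positivity
  rw [abs_div, abs_of_pos hpos, div_le_iff₀ hpos, ← div_eq_inv_mul,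
    le_div_iff₀ (by positivity)]
  nlinarith [two_mul_le_add_sq |t| |ε|, sq_abs t, sq_abs ε]

section RadialExtension

variable {E F : Type*} [NormedAddCommGroup E] [NormedSpace ℝ E]
  [NormedAddCommGroup F] [NormedSpace ℝ F]

noncomputable def radialExtension (r : ℝ) (f : E → F) (x : E) : F :=
  if x = 0 then 0 else (‖x‖ / r) • f ((r / ‖x‖) • x)

@[simp]
theorem radialExtension_zero (r : ℝ) (f : E → F) : radialExtension r f 0 = 0 := if_pos rfl

theorem radialExtension_of_ne_zero (r : ℝ) (f : E → F) {x : E} (hx : x ≠ 0) :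
    radialExtension r f x = (‖x‖ / r) • f ((r / ‖x‖) • x) := if_neg hx

theorem div_norm_smul_mem_sphere {r : ℝ} (hr : 0 ≤ r) {x : E} (hx : x ≠ 0) :
    (r / ‖x‖) • x ∈ sphere (0 : E) r := by
  have hx' : ‖x‖ ≠ 0 := norm_ne_zero_iff.2 hx
  rw [mem_sphere_zero_iff_norm, norm_smul, Real.norm_of_nonneg (by positivity),
    div_mul_cancel₀ r hx']

theorem norm_radialExtension_le {r K : ℝ} (hr : 0 < r) {f : E → F}
    (hK : ∀ x ∈ sphere (0 : E) r, ‖f x‖ / r ≤ K) (x : E) :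
    ‖radialExtension r f x‖ ≤ K * ‖x‖ := by
  rcases eq_or_ne x 0 with rfl | hx
  · simp
  have hfx := (div_le_iff₀ hr).1 (hK _ (div_norm_smul_mem_sphere hr.le hx))
  rw [radialExtension_of_ne_zero r f hx, norm_smul, Real.norm_of_nonneg (by positivity)]
  calc ‖x‖ / r * ‖f ((r / ‖x‖) • x)‖ ≤ ‖x‖ / r * (K * r) := by gcongr
    _ = K * ‖x‖ := by field_simp

theorem continuousOn_radialExtension {r K : ℝ} (hr : 0 < r) {f : E → F} (D : Submodule ℝ E)
    (hf : ContinuousOn f (sphere (0 : E) r ∩ D))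
    (hK : ∀ x ∈ sphere (0 : E) r, ‖f x‖ / r ≤ K) :
    ContinuousOn (radialExtension r f) D := by
  intro x hxD
  rcases eq_or_ne x 0 with rfl | hx
  · refine tendsto_nhdsWithin_of_tendsto_nhds ?_
    rw [radialExtension_zero]
    refine squeeze_zero_norm (norm_radialExtension_le hr hK) ?_
    simpa using ((continuous_norm.tendsto (0 : E)).const_mul K)
  have hne : ∀ᶠ y in 𝓝[(D : Set E)] x, y ≠ 0 :=
    nhdsWithin_le_nhds (continuousAt_id.eventually_ne hx)
  have hnorm : ContinuousAt (fun y : E => ‖y‖) x := continuous_norm.continuousAt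
  have hproj : ContinuousAt (fun y : E => (r / ‖y‖) • y) x :=
    (continuousAt_const.div hnorm (norm_ne_zero_iff.2 hx)).smul continuousAt_id
  have hmaps : ∀ᶠ y in 𝓝[(D : Set E)] x, (r / ‖y‖) • y ∈ sphere (0 : E) r ∩ D := by
    filter_upwards [hne, self_mem_nhdsWithin] with y hy hyD
    exact ⟨div_norm_smul_mem_sphere hr.le hy, D.smul_mem _ hyD⟩
  have hcomp : ContinuousWithinAt (fun y => f ((r / ‖y‖) • y)) D x :=
    (hf _ ⟨div_norm_smul_mem_sphere hr.le hx, D.smul_mem _ hxD⟩).tendsto.comp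
      (tendsto_nhdsWithin_iff.2 ⟨hproj.continuousWithinAt, hmaps⟩)
  refine ((hnorm.continuousWithinAt.div_const r).smul hcomp).congr_of_eventuallyEq ?_
    (radialExtension_of_ne_zero r f hx)
  filter_upwards [hne] with y hy using radialExtension_of_ne_zero r f hy

/-- The paper's `â`-compactness of `f` on `S`. -/
def IsGraphCompactOn (a : E →ₗ.[ℝ] F) (f : E → F) (S : Set E) : Prop :=
  ∀ (A₁ : Set E) (A₂ : Set F), IsBounded A₁ → IsBounded A₂ → A₁ ⊆ S →
    IsCompact (closure (f '' (A₁ ∩ {x : E | ∃ y ∈ A₂, (x, y) ∈ a.graph})))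

theorem isCompact_closure_radialExtension_image_of_le_norm {a : E →ₗ.[ℝ] F} {r δ : ℝ}
    (hr : 0 < r) (hδ : 0 < δ) {f : E → F} (hf : IsGraphCompactOn a f (sphere 0 r ∩ a.domain))
    {A₁ : Set E} {A₂ : Set F} (hA₁ : IsBounded A₁) (hA₂ : IsBounded A₂)
    (hgraph : ∀ x ∈ A₁, ∃ y ∈ A₂, (x, y) ∈ a.graph) (hδA : ∀ x ∈ A₁, δ ≤ ‖x‖) :
    IsCompact (closure (radialExtension r f '' A₁)) := by
  obtain ⟨R, hR⟩ := isBounded_iff_forall_norm_le.1 hA₁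
  obtain ⟨C, hC⟩ := isBounded_iff_forall_norm_le.1 hA₂
  have hx0 : ∀ x ∈ A₁, 0 < ‖x‖ := fun x hx => hδ.trans_le (hδA x hx)
  set B := (fun x : E => (r / ‖x‖) • x) '' A₁
  have hBS : B ⊆ sphere 0 r ∩ a.domain := by
    rintro _ ⟨x, hx, rfl⟩
    obtain ⟨y, -, hxy⟩ := hgraph x hx
    exact ⟨div_norm_smul_mem_sphere hr.le (norm_pos_iff.1 (hx0 x hx)),
      a.domain.smul_mem _ (LinearPMap.mem_domain_of_mem_graph hxy)⟩
  -- normalising to the sphere scales the graph component by at most `r / δ`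
  have hBgraph : B ⊆ {x | ∃ y ∈ closedBall (0 : F) (r / δ * C), (x, y) ∈ a.graph} := by
    rintro _ ⟨x, hx, rfl⟩
    obtain ⟨y, hy, hxy⟩ := hgraph x hx
    refine ⟨(r / ‖x‖) • y, ?_, a.graph.smul_mem _ hxy⟩
    rw [mem_closedBall_zero_iff, norm_smul, Real.norm_of_nonneg (div_pos hr (hx0 x hx)).le]
    gcongr
    exacts [hδA x hx, hC y hy]
  have hK : IsCompact (closure (f '' B)) := by
    have := hf B (closedBall 0 (r / δ * C)) (isBounded_sphere.subset fun _ hx => (hBS hx).1)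
      isBounded_closedBall hBS
    rwa [Set.inter_eq_self_of_subset_left hBgraph] at this
  refine ((isCompact_Icc (a := 0) (b := R / r)).smul_set hK).closure_of_subset ?_
  rintro _ ⟨x, hx, rfl⟩
  rw [radialExtension_of_ne_zero r f (norm_pos_iff.1 (hx0 x hx))]
  exact Set.smul_mem_smul ⟨by positivity, by gcongr; exact hR x hx⟩
    (subset_closure ⟨_, ⟨x, hx, rfl⟩, rfl⟩)

theorem isCompact_closure_radialExtension_image [CompleteSpace F] {a : E →ₗ.[ℝ] F} {r K : ℝ}
    (hr : 0 < r) {f : E → F} (hf : IsGraphCompactOn a f (sphere 0 r ∩ a.domain))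
    (hK : ∀ x ∈ sphere (0 : E) r, ‖f x‖ / r ≤ K) {A₁ : Set E} {A₂ : Set F}
    (hA₁ : IsBounded A₁) (hA₂ : IsBounded A₂) (hgraph : ∀ x ∈ A₁, ∃ y ∈ A₂, (x, y) ∈ a.graph) :
    IsCompact (closure (radialExtension r f '' A₁)) := by
  refine (totallyBounded_closure.2 ?_).isCompact_of_isClosed isClosed_closure
  refine totallyBounded_of_forall_subset_union_ball 0 fun η hη => ?_
  set δ := η / (|K| + 1)
  have hδ : 0 < δ := by positivity
  refine ⟨closure (radialExtension r f '' {x ∈ A₁ | δ ≤ ‖x‖}),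
    (isCompact_closure_radialExtension_image_of_le_norm hr hδ hf
      (hA₁.subset (Set.sep_subset _ _)) hA₂ (fun x hx => hgraph x hx.1)
      fun _ hx => hx.2).totallyBounded, ?_⟩
  rintro _ ⟨x, hx, rfl⟩
  by_cases hxδ : δ ≤ ‖x‖
  · exact Or.inl (subset_closure ⟨x, ⟨hx, hxδ⟩, rfl⟩)
  refine Or.inr (mem_ball_zero_iff.2 ?_)
  calc ‖radialExtension r f x‖ ≤ K * ‖x‖ := norm_radialExtension_le hr hK x
    _ ≤ |K| * δ := mul_le_mul (le_abs_self K) (not_le.1 hxδ).le (norm_nonneg x) (abs_nonneg K)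
    _ < η := by
      rw [mul_div_assoc', div_lt_iff₀ (by positivity)]
      nlinarith

end RadialExtension

theorem isBounded_image_smul_add_sq_smul {E F : Type*} [NormedAddCommGroup E] [NormedSpace ℝ E]
    [NormedAddCommGroup F] {s : F → E} {k : ℝ} (hs : ∀ y, ‖s y‖ ≤ k * ‖y‖) (c : E)
    {A : Set (F × ℝ)} (hA : IsBounded A) :
    IsBounded ((fun p : F × ℝ => p.2 • s p.1 + p.2 ^ 2 • c) '' A) := by
  obtain ⟨R, hR⟩ := isBounded_iff_forall_norm_le.1 hA
  refine isBounded_iff_forall_norm_le.2 ⟨R * (|k| * R) + R ^ 2 * ‖c‖, ?_⟩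
  rintro _ ⟨p, hp, rfl⟩
  have h₁ : ‖p.1‖ ≤ R := (norm_fst_le p).trans (hR p hp)
  have h₂ : |p.2| ≤ R := (norm_snd_le p).trans (hR p hp)
  calc ‖p.2 • s p.1 + p.2 ^ 2 • c‖ ≤ |p.2| * ‖s p.1‖ + |p.2| ^ 2 * ‖c‖ := by
        refine (norm_add_le _ _).trans_eq ?_
        rw [norm_smul, norm_smul, norm_pow, Real.norm_eq_abs]
    _ ≤ R * (|k| * R) + R ^ 2 * ‖c‖ := by
        have hs' : ‖s p.1‖ ≤ |k| * R :=
          (hs p.1).trans (mul_le_mul (le_abs_self k) h₁ (norm_nonneg _) (abs_nonneg k))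
        gcongr
        exact (abs_nonneg _).trans h₂

theorem phi_eps_compact_general
    {E₁ E₂ : Type*} [NormedAddCommGroup E₁] [NormedSpace ℝ E₁]
    [NormedAddCommGroup E₂] [NormedSpace ℝ E₂] [CompleteSpace E₂]
    (a : E₁ →ₗ.[ℝ] E₂)
    (r ε kfinv ks : ℝ) (hr : 0 < r) (hε : ε ≠ 0)
    (f : E₁ → E₂)
    (hfc : ContinuousOn f (sphere (0 : E₁) r ∩ a.domain))
    (hbound : ∀ x ∈ sphere (0 : E₁) r, ‖f x‖ / r ≤ kfinv)
    (hfcomp : ∀ (A₁ : Set E₁) (A₂ : Set E₂), IsBounded A₁ → IsBounded A₂ →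
      A₁ ⊆ sphere (0 : E₁) r ∩ a.domain →
      IsCompact (closure (f '' (A₁ ∩ {x : E₁ | ∃ y ∈ A₂, (x, y) ∈ a.graph}))))
    (fr : E₁ → E₂)
    (hfr : ∀ x : E₁, fr x = if x = 0 then 0 else (‖x‖ / r) • f ((r / ‖x‖) • x))
    (s : E₂ → E₁) (hscont : Continuous s)
    (hsec : ∀ y : E₂, (s y, y) ∈ a.graph)
    (hsb : ∀ y : E₂, ‖s y‖ ≤ ks * ‖y‖)
    (c : E₁) (hc : (c, (0 : E₂)) ∈ a.graph)
    (φ : E₂ × ℝ → E₂)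
    (hφ : ∀ p : E₂ × ℝ, φ p = (p.2 / (p.2 ^ 2 + ε ^ 2)) • fr (p.2 • s p.1 + p.2 ^ 2 • c)) :
    Continuous φ ∧
    ∀ A : Set (E₂ × ℝ), IsBounded A → IsCompact (closure (φ '' A)) := by
  obtain rfl : fr = radialExtension r f := funext hfr
  obtain rfl := funext hφ
  set g : E₂ × ℝ → E₁ := fun p => p.2 • s p.1 + p.2 ^ 2 • c
  have hg_graph : ∀ p : E₂ × ℝ, (g p, p.2 • p.1) ∈ a.graph := fun p => by
    simpa [g] using
      a.graph.add_mem (a.graph.smul_mem p.2 (hsec p.1)) (a.graph.smul_mem (p.2 ^ 2) hc)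
  refine ⟨?_, fun A hA => ?_⟩
  · have hg : Continuous g := by fun_prop
    exact (continuous_snd.div (by fun_prop) fun p => by positivity).smul
      ((continuousOn_radialExtension hr a.domain hfc hbound).comp_continuous hg
        fun p => LinearPMap.mem_domain_of_mem_graph (hg_graph p))
  · have hgA : IsBounded (g '' A) := isBounded_image_smul_add_sq_smul hsb c hA
    have hAgraph : IsBounded ((fun p : E₂ × ℝ => p.2 • p.1) '' A) := by
      simpa using isBounded_image_smul_add_sq_smul (s := (id : E₂ → E₂)) (k := 1) (by simp) 0 hA
    have hK := isCompact_closure_radialExtension_image hr hfcomp hbound hgA hAgraph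
      (by rintro _ ⟨p, hp, rfl⟩; exact ⟨_, ⟨p, hp, rfl⟩, hg_graph p⟩)
    refine ((isCompact_Icc (a := -(2 * |ε|)⁻¹) (b := (2 * |ε|)⁻¹)).smul_set hK).closure_of_subset ?_
    rintro _ ⟨p, hp, rfl⟩
    exact Set.smul_mem_smul (abs_le.1 (abs_div_sq_add_sq_le p.2 hε))
      (subset_closure ⟨_, ⟨p, hp, rfl⟩, rfl⟩)

/-- Under the main construction's hypotheses (`f` an `â`-compact map on
`S_r(0) ∩ D(â)` with `sup_{S_r(0)} ‖f‖/r = k_f⁻¹ < ∞`, `f_r` its radial extension,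
`s` a continuous odd section of `â` with `‖s y‖ ≤ k_s ‖y‖`, `c̄ ∈ ker â`), the map
`φ_r^{(ε)}(y,t) = (t/(t²+ε²)) • f_r (t • s y + t² • c̄)` is compact on `E₂ ⊕ ℝ` for every
`ε ≠ 0`: it is continuous and maps bounded sets to relatively compact sets. -/
theorem phi_eps_compact
    {E₁ E₂ : Type*} [NormedAddCommGroup E₁] [NormedSpace ℝ E₁] [CompleteSpace E₁]
    [NormedAddCommGroup E₂] [NormedSpace ℝ E₂] [CompleteSpace E₂]
    (a : E₁ →ₗ.[ℝ] E₂)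
    (hclosed : IsClosed (a.graph : Set (E₁ × E₂)))
    (hsurj : ∀ y : E₂, ∃ x : a.domain, a x = y)
    (r ε kfinv ks : ℝ) (hr : 0 < r) (hε : ε ≠ 0)
    (f : E₁ → E₂)
    (hfc : ContinuousOn f (sphere (0 : E₁) r ∩ a.domain))
    (hbound : ∀ x ∈ sphere (0 : E₁) r, ‖f x‖ / r ≤ kfinv)
    (hfcomp : ∀ (A₁ : Set E₁) (A₂ : Set E₂), IsBounded A₁ → IsBounded A₂ →
      A₁ ⊆ sphere (0 : E₁) r ∩ a.domain →
      IsCompact (closure (f '' (A₁ ∩ {x : E₁ | ∃ y ∈ A₂, (x, y) ∈ a.graph}))))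
    (fr : E₁ → E₂)
    (hfr : ∀ x : E₁, fr x = if x = 0 then 0 else (‖x‖ / r) • f ((r / ‖x‖) • x))
    (s : E₂ → E₁) (hscont : Continuous s)
    (hsodd : ∀ y : E₂, s (-y) = - s y)
    (hsec : ∀ y : E₂, (s y, y) ∈ a.graph)
    (hsb : ∀ y : E₂, ‖s y‖ ≤ ks * ‖y‖)
    (c : E₁) (hc : (c, (0 : E₂)) ∈ a.graph)
    (φ : E₂ × ℝ → E₂)
    (hφ : ∀ p : E₂ × ℝ, φ p = (p.2 / (p.2 ^ 2 + ε ^ 2)) • fr (p.2 • s p.1 + p.2 ^ 2 • c)) :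
    Continuous φ ∧
    ∀ A : Set (E₂ × ℝ), IsBounded A → IsCompact (closure (φ '' A)) :=
  phi_eps_compact_general a r ε kfinv ks hr hε f hfc hbound hfcomp fr hfr s hscont hsec hsb c hc φ
    hφ
end

section
/- Suppose (y_ε, t_ε) ∈ E₂ ⊕ ℝ satisfies ‖y_ε‖² + t_ε² = 1 and (t_ε/(t_ε² + ε²))·f_r(t_ε s(y_ε) + t_ε² c̄) = y_ε with t_ε ≠ 0. Then the vector x_ε := r·t_ε·(s(y_ε) + t_ε c̄) / (|t_ε|·‖s(y_ε) + t_ε c̄‖) lies on the sphere S_r(0) and satisfies f(x_ε) = ((t_ε² + ε²)/t_ε²)·â x_ε. -/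
open scoped Classical

/-!
Put `v := s y + t • c`. Since `c ∈ ker â` and `s` is a section of `â`, the pair
`(v, y)` lies in the graph of `â`, hence so does `(k • v, k • y)` for every scalar `k`; with
`k = r t / (|t| ‖v‖)` this gives `x ∈ D(â)` and `â x = k • y`. The argument of `f_r` in the
fixed-point equation is `t • v`, whose radial projection onto `S_r(0)` is exactly `x`, so the
equation reads `f x = (r / ‖t • v‖) • f_r (t • v) = (r / ‖t • v‖) • ((t² + ε²) / t) • y`,
which is the claimed multiple of `â x`.
-/

namespace LinearPMap

variable {R E F : Type*} [Ring R] [AddCommGroup E] [Module R E] [AddCommGroup F] [Module R F]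

theorem smul_add_smul_mem_graph_of_mem_ker (a : E →ₗ.[R] F) {u c : E} {y : F}
    (hu : (u, y) ∈ a.graph) (hc : (c, (0 : F)) ∈ a.graph) (k t : R) :
    (k • (u + t • c), k • y) ∈ a.graph := by
  have hsum : (u + t • c, y) ∈ a.graph := by
    simpa using a.graph.add_mem hu (a.graph.smul_mem t hc)
  simpa using a.graph.smul_mem k hsum

theorem exists_apply_eq_of_mem_graph (a : E →ₗ.[R] F) {x : E} {y : F} (h : (x, y) ∈ a.graph) :
    ∃ hx : x ∈ a.domain, a ⟨x, hx⟩ = y :=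
  ⟨mem_domain_of_mem_graph h, ((image_iff _).mpr h).symm⟩

end LinearPMap

section Radial

variable {E F : Type*} [NormedAddCommGroup E] [NormedSpace ℝ E] [AddCommGroup F] [Module ℝ F]

theorem norm_smul_div_abs_mul_norm {r t : ℝ} (hr : 0 ≤ r) (ht : t ≠ 0) {v : E} (hv : v ≠ 0) :
    ‖((r * t) / (|t| * ‖v‖)) • v‖ = r := by
  have hv' : ‖v‖ ≠ 0 := norm_ne_zero_iff.mpr hv
  have ht' : |t| ≠ 0 := abs_ne_zero.mpr ht
  rw [norm_smul, Real.norm_eq_abs, abs_div, abs_mul, abs_mul, abs_abs, abs_norm, abs_of_nonneg hr]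
  field_simp

theorem apply_smul_div_norm_of_radial {f fr : E → F} {r : ℝ} (hr : r ≠ 0)
    (hfr : ∀ x : E, fr x = if x = 0 then 0 else (‖x‖ / r) • f ((r / ‖x‖) • x))
    {w : E} (hw : w ≠ 0) :
    f ((r / ‖w‖) • w) = (r / ‖w‖) • fr w := by
  have hw' : ‖w‖ ≠ 0 := norm_ne_zero_iff.mpr hw
  rw [hfr, if_neg hw, smul_smul, div_mul_div_cancel₀ hw', div_self hr, one_smul]

end Radial

theorem fixed_point_gives_sphere_solution_general
    {E₁ E₂ : Type*} [NormedAddCommGroup E₁] [NormedSpace ℝ E₁]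
    [NormedAddCommGroup E₂] [NormedSpace ℝ E₂]
    (a : E₁ →ₗ.[ℝ] E₂)
    (r ε t : ℝ) (hr : 0 < r) (ht : t ≠ 0)
    (f fr : E₁ → E₂)
    (hfr : ∀ x : E₁, fr x = if x = 0 then 0 else (‖x‖ / r) • f ((r / ‖x‖) • x))
    (s : E₂ → E₁) (hsec : ∀ y' : E₂, (s y', y') ∈ a.graph)
    (c : E₁) (hc : (c, (0 : E₂)) ∈ a.graph)
    (y : E₂)
    (hne : s y + t • c ≠ 0)
    (heq : (t / (t ^ 2 + ε ^ 2)) • fr (t • s y + t ^ 2 • c) = y)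
    (x : E₁) (hx : x = ((r * t) / (|t| * ‖s y + t • c‖)) • (s y + t • c)) :
    ‖x‖ = r ∧
    ∃ hxd : x ∈ a.domain, f x = ((t ^ 2 + ε ^ 2) / t ^ 2) • a ⟨x, hxd⟩ := by
  set v := s y + t • c
  have hv : ‖v‖ ≠ 0 := norm_ne_zero_iff.mpr hne
  have htv : t • v ≠ 0 := smul_ne_zero ht hne
  have hte : t ^ 2 + ε ^ 2 ≠ 0 := by positivity
  have hx_radial : x = (r / ‖t • v‖) • (t • v) := by
    rw [hx, smul_smul, norm_smul, Real.norm_eq_abs]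
    congr 1
    ring
  have hfr_tv : fr (t • v) = ((t ^ 2 + ε ^ 2) / t) • y := by
    rw [← inv_div, eq_inv_smul_iff₀ (div_ne_zero ht hte), ← heq, smul_add, smul_smul, sq]
  refine ⟨hx ▸ norm_smul_div_abs_mul_norm hr.le ht hne, ?_⟩
  obtain ⟨hxd, hax⟩ := a.exists_apply_eq_of_mem_graph
    (hx ▸ a.smul_add_smul_mem_graph_of_mem_ker (hsec y) hc ((r * t) / (|t| * ‖v‖)) t)
  refine ⟨hxd, ?_⟩
  rw [hax, smul_smul, hx_radial, apply_smul_div_norm_of_radial hr.ne' hfr htv, hfr_tv, smul_smul,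
    norm_smul, Real.norm_eq_abs]
  congr 1
  field_simp

/-- If `(y_ε, t_ε)` satisfies `‖y_ε‖² + t_ε² = 1` and
`(t_ε/(t_ε²+ε²)) • f_r (t_ε • s y_ε + t_ε² • c̄) = y_ε` with `t_ε ≠ 0`, then
`x_ε := (r t_ε/(|t_ε| ‖s y_ε + t_ε c̄‖)) • (s y_ε + t_ε • c̄)` lies on the sphere `S_r(0)`
and satisfies `f x_ε = ((t_ε²+ε²)/t_ε²) • â x_ε`. -/
theorem fixed_point_gives_sphere_solution
    {E₁ E₂ : Type*} [NormedAddCommGroup E₁] [NormedSpace ℝ E₁] [CompleteSpace E₁]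
    [NormedAddCommGroup E₂] [NormedSpace ℝ E₂] [CompleteSpace E₂]
    (a : E₁ →ₗ.[ℝ] E₂)
    (r ε t : ℝ) (hr : 0 < r) (hε : ε ≠ 0) (ht : t ≠ 0)
    (f fr : E₁ → E₂)
    (hfr : ∀ x : E₁, fr x = if x = 0 then 0 else (‖x‖ / r) • f ((r / ‖x‖) • x))
    (s : E₂ → E₁) (hsec : ∀ y' : E₂, (s y', y') ∈ a.graph)
    (c : E₁) (hc : (c, (0 : E₂)) ∈ a.graph) (hcne : c ≠ 0)
    (y : E₂) (hyt : ‖y‖ ^ 2 + t ^ 2 = 1)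
    (hne : s y + t • c ≠ 0)
    (heq : (t / (t ^ 2 + ε ^ 2)) • fr (t • s y + t ^ 2 • c) = y)
    (x : E₁) (hx : x = ((r * t) / (|t| * ‖s y + t • c‖)) • (s y + t • c)) :
    ‖x‖ = r ∧
    ∃ hxd : x ∈ a.domain, f x = ((t ^ 2 + ε ^ 2) / t ^ 2) • a ⟨x, hxd⟩ :=
  fixed_point_gives_sphere_solution_general a r ε t hr ht f fr hfr s hsec c hc y hne heq x hx
end
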